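/- There exists an absolute constant C > 0 such that for every integer d ≥ 1 and all x, y ∈ (1/2, 1): | G_d(x) − G_d(y) | ≤ C·Γ(d/2 + 1)·|x − y|, where G_d(x) := x·4^x·Γ(d/2 + x)·Γ(x)·sin(πx). -/

import Mathlib

open Real

/-- `G_d(x) := x·4^x·Γ(d/2 + x)·Γ(x)·sin(πx)`. -/
noncomputable def Gfun (d : ℕ) (x : ℝ) : ℝ :=
  x * (4 : ℝ) ^ x * Real.Gamma ((d : ℝ) / 2 + x) * Real.Gamma x * Real.sin (Real.pi * x)

/-!
Since `x Γ(x) = Γ(x + 1)`, `G_d(x) = 4^x Γ(x + 1) · Γ(d/2 + x) sin(πx)`, and by the mean value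
theorem it suffices to bound the derivative. The first factor is harmless on `[0, 1]`. In the
second, convexity of `Γ` gives `Γ(d/2 + x) ≤ 2 Γ(d/2 + 1)` and bounds `Γ'(d/2 + x)` by secant
slopes; these grow with `d` as `x → 0` or `x → 1`, but the factor `sin(πx)` vanishes to first order
at both ends and compensates.
-/

open Set

namespace Real

lemma differentiableAt_Gamma_of_pos {x : ℝ} (hx : 0 < x) : DifferentiableAt ℝ Gamma x :=
  differentiableOn_Gamma_Ioi.differentiableAt (Ioi_mem_nhds hx)

lemma deriv_Gamma_mul_sub_le {t u : ℝ} (ht : 0 < t) (htu : t < u) :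
    deriv Gamma t * (u - t) ≤ Gamma u - Gamma t := by
  have h := convexOn_Gamma.deriv_le_slope ht (ht.trans htu) htu (differentiableAt_Gamma_of_pos ht)
  rwa [slope_def_field, le_div_iff₀ (sub_pos.2 htu)] at h

lemma Gamma_sub_le_deriv_Gamma_mul_sub {s t : ℝ} (hs : 0 < s) (hst : s < t) :
    Gamma t - Gamma s ≤ deriv Gamma t * (t - s) := by
  have h := convexOn_Gamma.slope_le_deriv hs (hs.trans hst) hst
    (differentiableAt_Gamma_of_pos (hs.trans hst))
  rwa [slope_def_field, div_le_iff₀ (sub_pos.2 hst)] at h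

lemma Gamma_le_max_of_mem_Icc {a b t : ℝ} (ha : 0 < a) (ht : t ∈ Icc a b) :
    Gamma t ≤ max (Gamma a) (Gamma b) := by
  refine convexOn_Gamma.le_on_segment ha (ha.trans_le (ht.1.trans ht.2)) ?_
  rwa [segment_eq_Icc (ht.1.trans ht.2)]

lemma Gamma_le_one_of_mem_Icc {t : ℝ} (ht : t ∈ Icc 1 2) : Gamma t ≤ 1 := by
  simpa [Gamma_one, Gamma_two] using Gamma_le_max_of_mem_Icc one_pos ht

lemma Gamma_le_two_mul_Gamma_add_one {c t : ℝ} (hc : 1 / 2 ≤ c) (ht : t ∈ Icc c (c + 1)) :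
    Gamma t ≤ 2 * Gamma (c + 1) := by
  have hc0 : 0 < c := by linarith
  have hrec : Gamma (c + 1) = c * Gamma c := Gamma_add_one hc0.ne'
  have hpos : 0 < Gamma c := Gamma_pos_of_pos hc0
  -- convexity reduces the claim to the endpoints, and `Γ c = Γ (c + 1) / c`
  refine (Gamma_le_max_of_mem_Icc hc0 ht).trans (max_le (by nlinarith) ?_)
  linarith [Gamma_pos_of_pos (show 0 < c + 1 by linarith)]

lemma abs_deriv_Gamma_le_four {t : ℝ} (ht : t ∈ Icc 1 2) : |deriv Gamma t| ≤ 4 := by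
  have hpos : 0 < Gamma t := Gamma_pos_of_pos (by linarith [ht.1])
  have hupper := deriv_Gamma_mul_sub_le (t := t) (u := 3) (by linarith [ht.1])
    (by linarith [ht.2])
  have hlower := Gamma_sub_le_deriv_Gamma_mul_sub (s := 1 / 2) (t := t) (by norm_num)
    (by linarith [ht.1])
  have hGamma3 : Gamma 3 = 2 := by
    rw [show (3 : ℝ) = 2 + 1 by norm_num, Gamma_add_one two_ne_zero, Gamma_two]; norm_num
  have hsqrt : √π ≤ 2 := by
    rw [sqrt_le_left (by norm_num)]; linarith [pi_le_four]
  rw [hGamma3] at hupper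
  rw [Gamma_one_half_eq] at hlower
  rw [abs_le]
  constructor <;> nlinarith [ht.1, ht.2]

end Real

section GammaSin

variable {c x : ℝ}

lemma hasDerivAt_Gamma_add_mul_sin (hcx : 0 < c + x) :
    HasDerivAt (fun x => Gamma (c + x) * sin (π * x))
      (deriv Gamma (c + x) * sin (π * x) + Gamma (c + x) * (cos (π * x) * π)) x := by
  have hGamma : HasDerivAt (fun x => Gamma (c + x)) (deriv Gamma (c + x)) x :=
    (differentiableAt_Gamma_of_pos hcx).hasDerivAt.comp_const_add c x
  have hsin : HasDerivAt (fun x => sin (π * x)) (cos (π * x) * π) x := by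
    simpa using ((hasDerivAt_id x).const_mul π).sin
  exact hGamma.mul hsin

lemma abs_Gamma_add_mul_sin_le (hc : 1 / 2 ≤ c) (hx : x ∈ Icc 0 1) :
    |Gamma (c + x) * sin (π * x)| ≤ 2 * Gamma (c + 1) := by
  have hGamma := Gamma_le_two_mul_Gamma_add_one hc (t := c + x)
    ⟨by linarith [hx.1], by linarith [hx.2]⟩
  have hpos := Gamma_pos_of_pos (show 0 < c + x by linarith [hx.1])
  rw [abs_mul, abs_of_pos hpos]
  nlinarith [abs_sin_le_one (π * x), abs_nonneg (sin (π * x))]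

/-- Convexity bounds `Γ'(c + x)` by the secant slopes towards `c + 1` and `c + x / 2`; the factor
`sin (π x) ≤ π min x (1 - x)` absorbs the secant lengths. -/
lemma abs_deriv_Gamma_add_mul_sin_le (hc : 1 / 2 ≤ c) (hx : x ∈ Ioo 0 1) :
    |deriv Gamma (c + x) * sin (π * x)| ≤ 4 * π * Gamma (c + 1) := by
  obtain ⟨hx0, hx1⟩ := hx
  have hpi := pi_pos
  have hsin_nonneg : 0 ≤ sin (π * x) :=
    sin_nonneg_of_nonneg_of_le_pi (by positivity) (by nlinarith)
  have hsin_left : sin (π * x) ≤ π * x := sin_le (by positivity)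
  have hsin_right : sin (π * x) ≤ π * (1 - x) := by
    rw [show π * x = π - π * (1 - x) by ring, sin_pi_sub]
    exact sin_le (by nlinarith)
  have hright := deriv_Gamma_mul_sub_le (t := c + x) (u := c + 1) (by linarith) (by linarith)
  have hleft := Gamma_sub_le_deriv_Gamma_mul_sub (s := c + x / 2) (t := c + x)
    (by linarith) (by linarith)
  have hmid := Gamma_le_two_mul_Gamma_add_one hc (t := c + x / 2) ⟨by linarith, by linarith⟩
  have hpos := Gamma_pos_of_pos (show 0 < c + x by linarith)
  rw [abs_le]
  rcases le_or_gt 0 (deriv Gamma (c + x)) with hderiv | hderiv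
  · constructor
    · nlinarith [mul_nonneg hderiv hsin_nonneg]
    · nlinarith [mul_le_mul_of_nonneg_left hsin_right hderiv]
  · constructor
    · nlinarith [mul_le_mul_of_nonneg_left hsin_left (neg_nonneg.2 hderiv.le)]
    · nlinarith [mul_nonneg (neg_nonneg.2 hderiv.le) hsin_nonneg]

end GammaSin

lemma hasDerivAt_rpow_mul_Gamma_add_one {b x : ℝ} (hb : 0 < b) (hx : 0 < x + 1) :
    HasDerivAt (fun x => b ^ x * Gamma (x + 1))
      (b ^ x * log b * Gamma (x + 1) + b ^ x * deriv Gamma (x + 1)) x :=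
  (hasStrictDerivAt_const_rpow hb x).hasDerivAt.mul
    ((differentiableAt_Gamma_of_pos hx).hasDerivAt.comp_add_const x 1)

section FourRpowGamma

variable {x : ℝ}

lemma four_rpow_le_four (hx : x ≤ 1) : (4 : ℝ) ^ x ≤ 4 := by
  simpa using rpow_le_rpow_of_exponent_le (by norm_num : (1 : ℝ) ≤ 4) hx

lemma abs_four_rpow_mul_Gamma_add_one_le (hx : x ∈ Icc 0 1) :
    |(4 : ℝ) ^ x * Gamma (x + 1)| ≤ 4 := by
  have hGamma := Gamma_le_one_of_mem_Icc (t := x + 1) ⟨by linarith [hx.1], by linarith [hx.2]⟩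
  have hpos := Gamma_pos_of_pos (show 0 < x + 1 by linarith [hx.1])
  rw [abs_of_pos (by positivity)]
  nlinarith [four_rpow_le_four hx.2, rpow_pos_of_pos (by norm_num : (0 : ℝ) < 4) x]

lemma abs_deriv_four_rpow_mul_Gamma_add_one_le (hx : x ∈ Icc 0 1) :
    |(4 : ℝ) ^ x * log 4 * Gamma (x + 1) + (4 : ℝ) ^ x * deriv Gamma (x + 1)| ≤ 28 := by
  have hx1 : x + 1 ∈ Icc (1 : ℝ) 2 := ⟨by linarith [hx.1], by linarith [hx.2]⟩
  have hGamma := Gamma_le_one_of_mem_Icc hx1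
  have hderiv := abs_deriv_Gamma_le_four hx1
  have hpos := Gamma_pos_of_pos (show 0 < x + 1 by linarith [hx.1])
  have hrpow := four_rpow_le_four hx.2
  have hrpow_pos := rpow_pos_of_pos (by norm_num : (0 : ℝ) < 4) x
  have hlog : log 4 ≤ 3 := by linarith [log_le_sub_one_of_pos (by norm_num : (0 : ℝ) < 4)]
  have hlog_nonneg : 0 ≤ log 4 := log_nonneg (by norm_num)
  calc |(4 : ℝ) ^ x * log 4 * Gamma (x + 1) + (4 : ℝ) ^ x * deriv Gamma (x + 1)|
      ≤ (4 : ℝ) ^ x * log 4 * Gamma (x + 1) + (4 : ℝ) ^ x * |deriv Gamma (x + 1)| := by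
        refine (abs_add_le _ _).trans ?_
        rw [abs_of_nonneg (by positivity), abs_mul, abs_of_pos hrpow_pos]
    _ ≤ 4 * 3 * 1 + 4 * 4 := by gcongr
    _ = 28 := by norm_num

end FourRpowGamma

lemma Gfun_eq_mul {d : ℕ} {x : ℝ} (hx : x ≠ 0) :
    Gfun d x = (4 : ℝ) ^ x * Gamma (x + 1) * (Gamma (d / 2 + x) * sin (π * x)) := by
  rw [Gfun, Gamma_add_one hx]
  ring

lemma hasDerivAt_Gfun (d : ℕ) {x : ℝ} (hx : 0 < x) :
    HasDerivAt (Gfun d)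
      (((4 : ℝ) ^ x * log 4 * Gamma (x + 1) + (4 : ℝ) ^ x * deriv Gamma (x + 1)) *
          (Gamma (d / 2 + x) * sin (π * x)) +
        (4 : ℝ) ^ x * Gamma (x + 1) *
          (deriv Gamma (d / 2 + x) * sin (π * x) + Gamma (d / 2 + x) * (cos (π * x) * π))) x := by
  refine ((hasDerivAt_rpow_mul_Gamma_add_one (by norm_num) (by linarith)).mul
    (hasDerivAt_Gamma_add_mul_sin (by positivity))).congr_of_eventuallyEq ?_
  filter_upwards [Ioi_mem_nhds hx] with y hy using Gfun_eq_mul (ne_of_gt hy)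

lemma abs_Gfun_sub_le {d : ℕ} (hd : 1 ≤ d) {x y : ℝ} (hx : x ∈ Ioo 0 1) (hy : y ∈ Ioo 0 1) :
    |Gfun d x - Gfun d y| ≤ (56 + 24 * π) * Gamma (d / 2 + 1) * |x - y| := by
  have hc : 1 / 2 ≤ (d : ℝ) / 2 := by
    have : (1 : ℝ) ≤ d := by exact_mod_cast hd
    linarith
  refine (convex_Ioo 0 1).norm_image_sub_le_of_norm_hasDerivWithin_le
    (fun z hz => (hasDerivAt_Gfun d hz.1).hasDerivWithinAt) (fun z hz => ?_) hy hx
  have hz' := Ioo_subset_Icc_self hz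
  have hcos : |Gamma (d / 2 + z) * (cos (π * z) * π)| ≤ 2 * Gamma (d / 2 + 1) * π := by
    have hGamma := Gamma_le_two_mul_Gamma_add_one hc (t := d / 2 + z)
      ⟨by linarith [hz'.1], by linarith [hz'.2]⟩
    rw [abs_mul, abs_mul, abs_of_pos pi_pos,
      abs_of_pos (Gamma_pos_of_pos (by linarith [hz'.1]))]
    gcongr
    exact mul_le_of_le_one_left pi_pos.le (abs_cos_le_one _)
  rw [norm_eq_abs]
  calc _ ≤ |(4 : ℝ) ^ z * log 4 * Gamma (z + 1) + (4 : ℝ) ^ z * deriv Gamma (z + 1)| *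
          |Gamma (d / 2 + z) * sin (π * z)| +
        |(4 : ℝ) ^ z * Gamma (z + 1)| *
          (|deriv Gamma (d / 2 + z) * sin (π * z)| + |Gamma (d / 2 + z) * (cos (π * z) * π)|) := by
        refine (abs_add_le _ _).trans (add_le_add (abs_mul _ _).le ?_)
        rw [abs_mul]
        gcongr
        exact abs_add_le _ _
    _ ≤ 28 * (2 * Gamma (d / 2 + 1)) +
        4 * (4 * π * Gamma (d / 2 + 1) + 2 * Gamma (d / 2 + 1) * π) := by
        gcongr
        · exact abs_deriv_four_rpow_mul_Gamma_add_one_le hz'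
        · exact abs_Gamma_add_mul_sin_le hc hz'
        · exact abs_four_rpow_mul_Gamma_add_one_le hz'
        · exact abs_deriv_Gamma_add_mul_sin_le hc hz
    _ = (56 + 24 * π) * Gamma (d / 2 + 1) := by ring

theorem stmt6 :
    ∃ C > 0, ∀ (d : ℕ), 1 ≤ d → ∀ x ∈ Set.Ioo (1/2 : ℝ) 1, ∀ y ∈ Set.Ioo (1/2 : ℝ) 1,
      |Gfun d x - Gfun d y| ≤ C * Real.Gamma ((d : ℝ) / 2 + 1) * |x - y| :=
  ⟨56 + 24 * π, by positivity, fun _ hd _ hx _ hy =>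
    abs_Gfun_sub_le hd (Ioo_subset_Ioo_left (by norm_num) hx)
      (Ioo_subset_Ioo_left (by norm_num) hy)⟩
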